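/- arXiv:1509.05678 — 5 statements merged into one kernel-verified Lean document; each statement's English description precedes it below -/
import Mathlib

section
/- For any formal group law F over a commutative ring R and integers 0 ≤ t < j, the prime p lies in the ideal of R[[x]] generated by ⟨p^t⟩(x) and ⟨p^j⟩(x). Consequently, after inverting p, the power series ⟨p^t⟩(x) and ⟨p^j⟩(x) generate the unit ideal. -/
/-!
Since `⟨p^t⟩(x)` is a factor of `[p^{j-1}](x)`, which divides `f([p^{j-1}](x))`, the relation
`⟨p^j⟩(x) = p + f([p^{j-1}](x))` exhibits `p` as `⟨p^j⟩(x)` minus a multiple of `⟨p^t⟩(x)`.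
Once `p` is inverted this element of the ideal becomes a unit.
-/

open PowerSeries

theorem Ideal.mem_span_pair_of_dvd_sub {α : Type*} [CommRing α] {a b c : α} (h : a ∣ b - c) :
    c ∈ Ideal.span {a, b} := by
  obtain ⟨d, hd⟩ := h
  exact Ideal.mem_span_pair.mpr ⟨-d, 1, by linear_combination hd⟩

theorem PowerSeries.isUnit_map_C_of_isLocalization_away {R S : Type*} [CommRing R]
    [CommRing S] [Algebra R S] (r : R) [IsLocalization.Away r S] :
    IsUnit (PowerSeries.map (algebraMap R S) (C r)) := by
  rw [map_C]
  exact (IsLocalization.Away.algebraMap_isUnit r).map C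

/-- Here `pSer j = [p^j](x)`, `bSer j = ⟨p^j⟩(x)` and `fc j = f([p^j](x))`. -/
theorem p_in_span_of_bracket_series_general {R : Type*} [CommRing R] (p : ℕ)
    (pSer bSer fc : ℕ → PowerSeries R)
    (hfact : ∀ j : ℕ, pSer j = ∏ i ∈ Finset.range (j + 1), bSer i)
    (hbj : ∀ j : ℕ, 1 ≤ j → bSer j = PowerSeries.C (p : R) + fc (j - 1))
    (hfc : ∀ j : ℕ, pSer j ∣ fc j)
    (t j : ℕ) (htj : t < j) :
    ((PowerSeries.C (p : R)) ∈ Ideal.span {bSer t, bSer j}) ∧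
      (Ideal.span {(PowerSeries.map (algebraMap R (Localization.Away (p : R))) (bSer t)),
          (PowerSeries.map (algebraMap R (Localization.Away (p : R))) (bSer j))} = ⊤) := by
  have hbt_dvd_pSer : bSer t ∣ pSer (j - 1) :=
    hfact (j - 1) ▸ Finset.dvd_prod_of_mem _ (Finset.mem_range.mpr (by omega))
  have hdvd : bSer t ∣ bSer j - C (p : R) := by
    rw [hbj j (by omega), add_sub_cancel_left]
    exact hbt_dvd_pSer.trans (hfc (j - 1))
  set φ := PowerSeries.map (algebraMap R (Localization.Away (p : R)))
  have hdvd_map : φ (bSer t) ∣ φ (bSer j) - φ (C (p : R)) := by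
    simpa only [map_sub] using map_dvd φ hdvd
  exact ⟨Ideal.mem_span_pair_of_dvd_sub hdvd,
    Ideal.eq_top_of_isUnit_mem _ (Ideal.mem_span_pair_of_dvd_sub hdvd_map)
      (isUnit_map_C_of_isLocalization_away (p : R))⟩

/-- For a formal group law over a commutative ring `R` and
integers `0 ≤ t < j`, the prime `p` lies in the ideal of `R⟦x⟧` generated by
`⟨p^t⟩(x)` and `⟨p^j⟩(x)`; consequently, after inverting `p`, these two power
series generate the unit ideal.

Here `pSer j = [p^j](x)` is the `p^j`-series, `bSer j = ⟨p^j⟩(x)` with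
`⟨p^0⟩(x) = x` and `[p^j](x) = ∏_{i=0}^{j} ⟨p^i⟩(x)`.  Writing
`⟨p⟩(x) = p + f(x)` with `x ∣ f(x)`, one has `⟨p^j⟩(x) = p + f([p^{j-1}](x))`
for `j ≥ 1`; the power series `fc (j-1) = f([p^{j-1}](x))` satisfies
`[p^{j-1}](x) ∣ f([p^{j-1}](x))` since `x ∣ f(x)`. -/
theorem p_in_span_of_bracket_series {R : Type*} [CommRing R] (p : ℕ) [Fact p.Prime]
    (pSer bSer fc : ℕ → PowerSeries R)
    (hp0 : pSer 0 = PowerSeries.X)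
    (hb0 : bSer 0 = PowerSeries.X)
    (hfact : ∀ j : ℕ, pSer j = ∏ i ∈ Finset.range (j + 1), bSer i)
    (hbj : ∀ j : ℕ, 1 ≤ j → bSer j = PowerSeries.C (p : R) + fc (j - 1))
    (hfc : ∀ j : ℕ, pSer j ∣ fc j)
    (t j : ℕ) (htj : t < j) :
    ((PowerSeries.C (p : R)) ∈ Ideal.span {bSer t, bSer j}) ∧
      (Ideal.span {(PowerSeries.map (algebraMap R (Localization.Away (p : R))) (bSer t)),
          (PowerSeries.map (algebraMap R (Localization.Away (p : R))) (bSer j))} = ⊤) :=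
  p_in_span_of_bracket_series_general p pSer bSer fc hfact hbj hfc t j htj
end

section
/- Let R be a commutative ring and let (M_i)_{i∈I} be a family of R-modules such that for each i, multiplication by r is injective on M_i ⊗_R R/J for a fixed finitely presented quotient R/J and element r ∈ R. Then multiplication by r is injective on (∏_i M_i) ⊗_R R/J. -/
/-!
Since `R ⧸ J` is finitely presented, `J` is generated by finitely many `g₁, …, gₙ`, and
`M ⊗ R/J ≅ M ⧸ J • M`, on which `r` is regular iff `r • x ∈ J • M → x ∈ J • M`. Finiteness of the
generators is what makes `J • ∏ Mᵢ = ∏ (J • Mᵢ)`: coordinatewise expressions `mᵢ = ∑ₖ gₖ • vᵢₖ`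
assemble into `m = ∑ₖ gₖ • (vᵢₖ)ᵢ`. So the criterion for the product is checked coordinatewise.
-/

open TensorProduct

theorem Submodule.exists_sum_smul_eq_of_mem_span_smul_top {R M : Type*} [CommRing R]
    [AddCommGroup M] [Module R M] {t : Finset R} {x : M}
    (hx : x ∈ Ideal.span (t : Set R) • (⊤ : Submodule R M)) :
    ∃ v : R → M, ∑ g ∈ t, g • v g = x := by
  refine Submodule.smul_induction_on hx (fun a ha n _ => ?_) fun x y ⟨v, hv⟩ ⟨w, hw⟩ => ?_
  · obtain ⟨c, -, rfl⟩ := Submodule.mem_span_finset.mp ha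
    exact ⟨fun g => c g • n, by simp only [Finset.sum_smul, smul_smul, smul_eq_mul, mul_comm]⟩
  · exact ⟨v + w, by simp only [Pi.add_apply, smul_add, Finset.sum_add_distrib, hv, hw]⟩

theorem Ideal.FG.smul_top_eq_pi {R ι : Type*} [CommRing R] {M : ι → Type*}
    [∀ i, AddCommGroup (M i)] [∀ i, Module R (M i)] {J : Ideal R} (hJ : J.FG) :
    J • (⊤ : Submodule R (∀ i, M i)) =
      Submodule.pi Set.univ fun i => J • (⊤ : Submodule R (M i)) := by
  refine le_antisymm
    (Submodule.smul_le.mpr fun a ha m _ _ _ => Submodule.smul_mem_smul ha trivial) ?_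
  obtain ⟨t, rfl⟩ := hJ
  intro m hm
  choose v hv using fun i => Submodule.exists_sum_smul_eq_of_mem_span_smul_top (hm i trivial)
  have hsum : ∑ g ∈ t, g • (fun i => v i g) = m := by
    funext i
    simp [← hv i]
  rw [← hsum]
  exact Submodule.sum_mem _ fun g hg => Submodule.smul_mem_smul (Submodule.subset_span hg) trivial

theorem Ideal.fg_of_finitePresentation_quotient {R : Type*} [CommRing R] (J : Ideal R)
    [Module.FinitePresentation R (R ⧸ J)] : J.FG := by
  have := Module.FinitePresentation.fg_ker J.mkQ J.mkQ_surjective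
  rwa [Submodule.ker_mkQ] at this

theorem isSMulRegular_tensor_quotient_iff {R M : Type*} [CommRing R] [AddCommGroup M]
    [Module R M] (J : Ideal R) (r : R) :
    IsSMulRegular (M ⊗[R] (R ⧸ J)) r ↔
      ∀ x : M, r • x ∈ J • (⊤ : Submodule R M) → x ∈ J • (⊤ : Submodule R M) :=
  ((tensorQuotEquivQuotSMul M J).isSMulRegular_congr r).trans
    (isSMulRegular_quotient_iff_mem_of_smul_mem _ r)

/-- Let `R` be a commutative ring, `J ⊆ R` an ideal with `R/J`
finitely presented as an `R`-module, and `r ∈ R`.  If for every `i` multiplication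
by `r` is injective on `M i ⊗[R] R/J`, then multiplication by `r` is injective on
`(∏ i, M i) ⊗[R] R/J`. -/
theorem smul_injective_on_pi_tensor_quotient {R : Type*} [CommRing R]
    {ι : Type*} (M : ι → Type*) [∀ i, AddCommGroup (M i)] [∀ i, Module R (M i)]
    (J : Ideal R) [Module.FinitePresentation R (R ⧸ J)] (r : R)
    (hinj : ∀ i, Function.Injective (fun x : M i ⊗[R] (R ⧸ J) => r • x)) :
    Function.Injective (fun x : ((i : ι) → M i) ⊗[R] (R ⧸ J) => r • x) := by
  have hreg i := (isSMulRegular_tensor_quotient_iff J r).mp (hinj i)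
  refine (isSMulRegular_tensor_quotient_iff J r).mpr fun m hm => ?_
  rw [J.fg_of_finitePresentation_quotient.smul_top_eq_pi] at hm ⊢
  exact fun i _ => hreg i (m i) (hm i trivial)
end

section
/- For the formal group law of height n Morava E-theory (or any formal group law over a p-torsion-free complete local domain R whose p-series [p](x) = px + … has the property that R[[x]]/[p](x) is free of rank p^n), the cokernel of the map R[[x]]/[p](x) → R × R[[x]]/⟨p⟩(x), x ↦ (0, x), is annihilated by p. -/
open PowerSeries

/-! Write `⟨p⟩(x) = b = p + f` with `x ∣ f`. Under `g ↦ (g(0), g mod b)` we have `b ↦ (p, 0)` and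
`-f = p - b ↦ (0, p)`, so `p • (r, q mod b)` is the image of `r b - q f`: the element `-f/p` of the
paper's rational computation is only ever used multiplied by `p`. -/

namespace PowerSeries

variable {R : Type*} [CommRing R]

theorem constantCoeff_smul_mem_range_prod_mk (b : R⟦X⟧) (y : R × (R⟦X⟧ ⧸ Ideal.span {b})) :
    constantCoeff b • y ∈ Set.range (constantCoeff.prod (Ideal.Quotient.mk (Ideal.span {b}))) := by
  obtain ⟨r, q⟩ := y
  obtain ⟨q, rfl⟩ := Ideal.Quotient.mk_surjective q
  have hb : Ideal.Quotient.mk (Ideal.span {b}) b = 0 :=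
    Ideal.Quotient.eq_zero_iff_mem.mpr (Ideal.mem_span_singleton_self b)
  refine ⟨C r * b + q * (C (constantCoeff b) - b), ?_⟩
  rw [RingHom.prod_apply]
  ext
  · simp only [map_add, map_mul, map_sub, constantCoeff_C, Prod.smul_fst, smul_eq_mul]
    ring
  · simp only [Prod.smul_snd, map_add, map_mul, map_sub, hb, mul_zero, sub_zero, zero_add]
    rw [mul_comm, ← map_mul, ← smul_eq_C_mul]
    rfl

end PowerSeries

theorem coker_height_one_decomposition_killed_by_p_general {R : Type*} [CommRing R]
    (p : ℕ)
    (pSer1 b : PowerSeries R)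
    (hb : PowerSeries.constantCoeff b = (p : R))
    (φ : (PowerSeries R ⧸ Ideal.span {pSer1}) →+*
        R × (PowerSeries R ⧸ Ideal.span {b}))
    (hφ : ∀ g : PowerSeries R,
      φ (Ideal.Quotient.mk (Ideal.span {pSer1}) g) =
        (PowerSeries.constantCoeff g, Ideal.Quotient.mk (Ideal.span {b}) g)) :
    ∀ y : R × (PowerSeries R ⧸ Ideal.span {b}), p • y ∈ Set.range φ := by
  intro y
  obtain ⟨g, hg⟩ := constantCoeff_smul_mem_range_prod_mk b y
  refine ⟨Ideal.Quotient.mk _ g, ?_⟩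
  rw [hφ, ← Nat.cast_smul_eq_nsmul R, ← hb, ← hg]
  rfl

/-- Let `R` be a `p`-torsion-free complete local Noetherian
domain carrying a formal group law whose `p`-series `[p](x) = px + …` is such
that `R⟦x⟧/[p](x)` is free of rank `p^n`.  Write `[p](x) = x·⟨p⟩(x)` where
`⟨p⟩(x) = p + f(x)` with `x ∣ f(x)` (equivalently, `⟨p⟩(x)` has constant term
`p`).  Then the cokernel of the map
`R⟦x⟧/[p](x) → R × R⟦x⟧/⟨p⟩(x)`, `g(x) ↦ (g(0), g(x) mod ⟨p⟩(x))` (so `x ↦ (0,x)`),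
is annihilated by `p`. -/
theorem coker_height_one_decomposition_killed_by_p {R : Type*} [CommRing R]
    [IsDomain R] [IsLocalRing R] [IsNoetherianRing R]
    [IsAdicComplete (IsLocalRing.maximalIdeal R) R]
    (p : ℕ) [Fact p.Prime] (n : ℕ)
    (hptf : ∀ r : R, (p : R) * r = 0 → r = 0)
    (pSer1 b : PowerSeries R)
    (hfac : pSer1 = PowerSeries.X * b)
    (hb : PowerSeries.constantCoeff b = (p : R))
    (hfree : Module.Free R (PowerSeries R ⧸ Ideal.span {pSer1}))
    (hrank : Module.finrank R (PowerSeries R ⧸ Ideal.span {pSer1}) = p ^ n)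
    (φ : (PowerSeries R ⧸ Ideal.span {pSer1}) →+*
        R × (PowerSeries R ⧸ Ideal.span {b}))
    (hφ : ∀ g : PowerSeries R,
      φ (Ideal.Quotient.mk (Ideal.span {pSer1}) g) =
        (PowerSeries.constantCoeff g, Ideal.Quotient.mk (Ideal.span {b}) g)) :
    ∀ y : R × (PowerSeries R ⧸ Ideal.span {b}), p • y ∈ Set.range φ :=
  coker_height_one_decomposition_killed_by_p_general p pSer1 b hb φ hφ
end

section
/- More generally, for a formal group law over a p-torsion-free ring R, the cokernel of the canonical map R[[x]]/[p^k](x) → ∏_{j=0}^{k} R[[x]]/⟨p^j⟩(x) is annihilated by p^k (independently of the formal group law and of any 'height'). -/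
/-!
Write `b j = ⟨p^j⟩(x)` and `c j = f([p^j](x))`, so that `b (j + 1) = p + c j` and `b i ∣ c j`
for `i ≤ j`. Modulo `b j` every later factor `b i` (`i > j`) is congruent to `p`, while
`-c (j - 1)` is congruent to `p` modulo `b j` and vanishes modulo every earlier `b i`. Hence
`p^(j-1) · (-c (j - 1)) · ∏_{j < i ≤ k} b i` is `p^k` modulo `b j` and `0` modulo the other
factors: it is `p^k` times the idempotent of the `j`-th factor, and these elements lift
`p^k • y` for every `y` in the product.
-/

open PowerSeries Finset

theorem dvd_of_eq_mul_of_le {M : Type*} [CommMonoid M] {P B : ℕ → M} (h0 : P 0 = B 0)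
    (hrec : ∀ j, 1 ≤ j → P j = P (j - 1) * B j) {i j : ℕ} (hij : i ≤ j) : B i ∣ P j := by
  induction j, hij using Nat.le_induction with
  | base =>
    rcases i with _ | i
    · exact h0 ▸ dvd_rfl
    · rw [hrec (i + 1) (by omega)]
      exact dvd_mul_left _ _
  | succ n _ ih =>
    rw [hrec (n + 1) (by omega), Nat.add_sub_cancel]
    exact ih.mul_right _

theorem Ideal.exists_mk_eq_smul_of_forall_mk_eq {S ι : Type*} [CommRing S] [Fintype ι]
    (I : ι → Ideal S) (a : S) (e : ι → S)
    (he_self : ∀ j, Ideal.Quotient.mk (I j) (e j) = Ideal.Quotient.mk (I j) a)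
    (he_ne : ∀ i j, i ≠ j → e j ∈ I i) (y : (j : ι) → S ⧸ I j) :
    ∃ g : S, (fun j => Ideal.Quotient.mk (I j) g) = a • y := by
  choose g hg using fun j => Ideal.Quotient.mk_surjective (y j)
  refine ⟨∑ j, e j * g j, funext fun i => ?_⟩
  rw [map_sum, Finset.sum_eq_single i]
  · rw [map_mul, he_self, hg, Pi.smul_apply, Algebra.smul_def, Ideal.Quotient.algebraMap_eq]
  · intro j _ hji
    rw [map_mul, Ideal.Quotient.eq_zero_iff_mem.mpr (he_ne i j (Ne.symm hji)), zero_mul]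
  · exact fun h => absurd (Finset.mem_univ i) h

namespace CyclicDecomposition

variable {S : Type*} [CommRing S] (p : S) (b c : ℕ → S)

def scaledIdempotent (k : ℕ) : ℕ → S
  | 0 => ∏ i ∈ Ioc 0 k, b i
  | n + 1 => p ^ n * -c n * ∏ i ∈ Ioc (n + 1) k, b i

variable {p b c} (hc : ∀ i j, i ≤ j → b i ∣ c j)
include hc

theorem dvd_scaledIdempotent {i j k : ℕ} (hik : i ≤ k) (hij : i ≠ j) :
    b i ∣ scaledIdempotent p b c k j := by
  rcases lt_or_gt_of_ne hij with hlt | hgt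
  · obtain ⟨n, rfl⟩ : ∃ n, j = n + 1 := ⟨j - 1, by omega⟩
    exact (((hc i n (by omega)).neg_right).mul_left _).mul_right _
  · have hmem : b i ∣ ∏ l ∈ Ioc j k, b l :=
      Finset.dvd_prod_of_mem _ (Finset.mem_Ioc.mpr ⟨hgt, hik⟩)
    rcases j with _ | n
    · exact hmem
    · exact hmem.mul_left _

variable (hb : ∀ j, b (j + 1) = p + c j)
include hb

theorem mk_eq_of_lt {i j : ℕ} (hji : j < i) :
    Ideal.Quotient.mk (Ideal.span {b j}) (b i) = Ideal.Quotient.mk (Ideal.span {b j}) p := by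
  obtain ⟨n, rfl⟩ : ∃ n, i = n + 1 := ⟨i - 1, by omega⟩
  rw [hb, map_add, Ideal.Quotient.eq_zero_iff_mem.mpr
    (Ideal.mem_span_singleton.mpr (hc j n (by omega))), add_zero]

theorem mk_prod_Ioc (j k : ℕ) :
    Ideal.Quotient.mk (Ideal.span {b j}) (∏ i ∈ Ioc j k, b i) =
      Ideal.Quotient.mk (Ideal.span {b j}) (p ^ (k - j)) := by
  rw [map_prod, Finset.prod_congr rfl fun i hi => mk_eq_of_lt hc hb (Finset.mem_Ioc.mp hi).1,
    Finset.prod_const, Nat.card_Ioc, map_pow]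

theorem mk_scaledIdempotent_self {j k : ℕ} (hjk : j ≤ k) :
    Ideal.Quotient.mk (Ideal.span {b j}) (scaledIdempotent p b c k j) =
      Ideal.Quotient.mk (Ideal.span {b j}) (p ^ k) := by
  rcases j with _ | n
  · rw [scaledIdempotent, mk_prod_Ioc hc hb, Nat.sub_zero]
  · have hcn : Ideal.Quotient.mk (Ideal.span {b (n + 1)}) (-c n) =
        Ideal.Quotient.mk (Ideal.span {b (n + 1)}) p :=
      Ideal.Quotient.eq.mpr (Ideal.mem_span_singleton.mpr ⟨-1, by rw [hb]; ring⟩)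
    rw [scaledIdempotent, map_mul, map_mul, hcn, mk_prod_Ioc hc hb, ← map_mul, ← map_mul,
      ← pow_succ, ← pow_add]
    congr 2
    omega

end CyclicDecomposition

open CyclicDecomposition in
theorem coker_cyclic_decomposition_killed_by_p_pow_general {R : Type*} [CommRing R]
    (p : ℕ)
    (pSer bSer fc : ℕ → PowerSeries R)
    (hp0 : pSer 0 = PowerSeries.X)
    (hb0 : bSer 0 = PowerSeries.X)
    (hrec : ∀ j : ℕ, 1 ≤ j → pSer j = pSer (j - 1) * bSer j)
    (hbj : ∀ j : ℕ, bSer (j + 1) = PowerSeries.C (p : R) + fc j)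
    (hfc : ∀ j : ℕ, pSer j ∣ fc j)
    (k : ℕ)
    (φ : (PowerSeries R ⧸ Ideal.span {pSer k}) →+*
        ((j : Fin (k + 1)) → PowerSeries R ⧸ Ideal.span {bSer (j : ℕ)}))
    (hφ : ∀ g : PowerSeries R,
      φ (Ideal.Quotient.mk (Ideal.span {pSer k}) g) =
        fun j : Fin (k + 1) => Ideal.Quotient.mk (Ideal.span {bSer (j : ℕ)}) g) :
    ∀ y : (j : Fin (k + 1)) → PowerSeries R ⧸ Ideal.span {bSer (j : ℕ)},
      p ^ k • y ∈ Set.range φ := by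
  intro y
  have hb : ∀ j, bSer (j + 1) = (p : PowerSeries R) + fc j := by simpa using hbj
  have hc : ∀ i j, i ≤ j → bSer i ∣ fc j := fun i j hij =>
    (dvd_of_eq_mul_of_le (hp0.trans hb0.symm) hrec hij).trans (hfc j)
  obtain ⟨g, hg⟩ := Ideal.exists_mk_eq_smul_of_forall_mk_eq
    (fun j : Fin (k + 1) => Ideal.span {bSer (j : ℕ)}) ((p : PowerSeries R) ^ k)
    (fun j => scaledIdempotent (p : PowerSeries R) bSer fc k j)
    (fun j => mk_scaledIdempotent_self hc hb (Nat.lt_succ_iff.mp j.isLt))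
    (fun i j hij => Ideal.mem_span_singleton.mpr
      (dvd_scaledIdempotent hc (Nat.lt_succ_iff.mp i.isLt) (Fin.val_ne_of_ne hij)))
    y
  refine ⟨Ideal.Quotient.mk _ g, ?_⟩
  rw [hφ, hg, ← Nat.cast_pow, Nat.cast_smul_eq_nsmul]

/-- For a formal group law over a `p`-torsion-free commutative
ring `R`, the cokernel of the canonical map
`R⟦x⟧/[p^k](x) → ∏_{j=0}^{k} R⟦x⟧/⟨p^j⟩(x)`, `x ↦ (0, x, …, x)`, is annihilated
by `p^k`, independently of the formal group law and of any "height".  Here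
`pSer j = [p^j](x)` with `pSer 0 = x`, `bSer 0 = ⟨p^0⟩(x) = x`,
`[p^j](x) = [p^{j-1}](x)·⟨p^j⟩(x)`, and, writing `⟨p⟩(x) = p + f(x)` with
`x ∣ f(x)`, one has `⟨p^{j+1}⟩(x) = p + f([p^j](x))` where
`fc j = f([p^j](x))` is divisible by `[p^j](x)`. -/
theorem coker_cyclic_decomposition_killed_by_p_pow {R : Type*} [CommRing R]
    (p : ℕ) [Fact p.Prime]
    (hptf : ∀ r : R, (p : R) * r = 0 → r = 0)
    (pSer bSer fc : ℕ → PowerSeries R)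
    (hp0 : pSer 0 = PowerSeries.X)
    (hb0 : bSer 0 = PowerSeries.X)
    (hrec : ∀ j : ℕ, 1 ≤ j → pSer j = pSer (j - 1) * bSer j)
    (hbj : ∀ j : ℕ, bSer (j + 1) = PowerSeries.C (p : R) + fc j)
    (hfc : ∀ j : ℕ, pSer j ∣ fc j)
    (k : ℕ)
    (φ : (PowerSeries R ⧸ Ideal.span {pSer k}) →+*
        ((j : Fin (k + 1)) → PowerSeries R ⧸ Ideal.span {bSer (j : ℕ)}))
    (hφ : ∀ g : PowerSeries R,
      φ (Ideal.Quotient.mk (Ideal.span {pSer k}) g) =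
        fun j : Fin (k + 1) => Ideal.Quotient.mk (Ideal.span {bSer (j : ℕ)}) g) :
    ∀ y : (j : Fin (k + 1)) → PowerSeries R ⧸ Ideal.span {bSer (j : ℕ)},
      p ^ k • y ∈ Set.range φ :=
  coker_cyclic_decomposition_killed_by_p_pow_general p pSer bSer fc hp0 hb0 hrec hbj hfc k φ hφ
end

section
/- Let R' be a commutative ring, T' ⊆ R' an ideal annihilated by p^{k'}, and let g̃(z) ∈ R'[z] be such that g̃(z)·∏_{χ∈X}(z − c_χ) has all coefficients in T', for a finite set X and elements c_χ ∈ R'. Suppose π : R'[z] → Q is a ring quotient in which each π(z − c_χ) divides p. Then p^{k' + |X|} · π(g̃(z)) = 0 in Q. -/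
open Polynomial

theorem Polynomial.C_mul_eq_zero_of_coeff_mem {R : Type*} [CommRing R] {I : Ideal R} {r : R}
    (hr : ∀ t ∈ I, r * t = 0) {f : R[X]} (hf : ∀ i, f.coeff i ∈ I) : C r * f = 0 := by
  ext i
  rw [coeff_C_mul, coeff_zero]
  exact hr _ (hf i)

theorem pow_add_card_mul_eq_zero_of_dvd {M : Type*} [CommMonoidWithZero M] {ι : Type*}
    {X : Finset ι} {a g : M} {b : ι → M} {k : ℕ} (hdvd : ∀ χ ∈ X, b χ ∣ a)
    (h : a ^ k * (g * ∏ χ ∈ X, b χ) = 0) : a ^ (k + X.card) * g = 0 := by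
  obtain ⟨v, hv⟩ : ∏ χ ∈ X, b χ ∣ a ^ X.card :=
    Finset.prod_const (s := X) a ▸ Finset.prod_dvd_prod_of_dvd _ _ hdvd
  calc a ^ (k + X.card) * g = a ^ k * (g * ∏ χ ∈ X, b χ) * v := by rw [pow_add, hv]; ac_rfl
    _ = 0 := by rw [h, zero_mul]

theorem p_pow_kills_image_of_gtilde_general (p : ℕ)
    {R' : Type*} [CommRing R'] (T' : Ideal R') (k' : ℕ)
    (hT' : ∀ t ∈ T', (p : R') ^ k' * t = 0)
    {ι : Type*} (X : Finset ι) (c : ι → R')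
    (gt : Polynomial R')
    (hcoeff : ∀ i : ℕ, (gt * ∏ χ ∈ X, (Polynomial.X - Polynomial.C (c χ))).coeff i ∈ T')
    {Q : Type*} [CommRing Q] (π : Polynomial R' →+* Q)
    (hdvd : ∀ χ ∈ X, π (Polynomial.X - Polynomial.C (c χ)) ∣ (p : Q)) :
    (p : Q) ^ (k' + X.card) * π gt = 0 := by
  have hkill : C ((p : R') ^ k') * (gt * ∏ χ ∈ X, (Polynomial.X - C (c χ))) = 0 :=
    C_mul_eq_zero_of_coeff_mem hT' hcoeff
  refine pow_add_card_mul_eq_zero_of_dvd hdvd ?_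
  simpa [map_prod] using congrArg π hkill

/-- Let `R'` be a commutative ring, `T' ⊆ R'` an ideal
annihilated by `p^{k'}`, and `g̃(z) ∈ R'[z]` such that
`g̃(z) · ∏_{χ ∈ X} (z − c_χ)` has all coefficients in `T'`, for a finite index
set `X` and elements `c_χ ∈ R'`.  Suppose `π : R'[z] → Q` is a ring map to a
quotient in which each `π(z − c_χ)` divides `p`.  Then
`p^{k' + |X|} · π(g̃(z)) = 0` in `Q`. -/
theorem p_pow_kills_image_of_gtilde (p : ℕ) [Fact p.Prime]
    {R' : Type*} [CommRing R'] (T' : Ideal R') (k' : ℕ)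
    (hT' : ∀ t ∈ T', (p : R') ^ k' * t = 0)
    {ι : Type*} (X : Finset ι) (c : ι → R')
    (gt : Polynomial R')
    (hcoeff : ∀ i : ℕ, (gt * ∏ χ ∈ X, (Polynomial.X - Polynomial.C (c χ))).coeff i ∈ T')
    {Q : Type*} [CommRing Q] (π : Polynomial R' →+* Q)
    (hπ : Function.Surjective π)
    (hdvd : ∀ χ ∈ X, π (Polynomial.X - Polynomial.C (c χ)) ∣ (p : Q)) :
    (p : Q) ^ (k' + X.card) * π gt = 0 :=
  p_pow_kills_image_of_gtilde_general p T' k' hT' X c gt hcoeff π hdvd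
end
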